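/- arXiv:quant-ph/0606223 — 6 statements merged into one kernel-verified Lean document; each statement's English description precedes it below -/
import Mathlib

section
/- For every bounded measurable function f : Γ → ℂ there exists a unique bounded (continuous) linear operator A(f) on H such that ⟨φ, A(f)ψ⟩ = ∫_Γ f(x) ⟨φ, η_x⟩⟨η_x, ψ⟩ dμ(x) for all φ, ψ ∈ H, and its operator norm satisfies ‖A(f)‖ ≤ sup_{x ∈ Γ} |f(x)|. -/
open MeasureTheory
open scoped InnerProductSpace

/-- For every bounded measurable `f : Γ → ℂ` there is a unique
bounded linear operator `A(f)` on `H` with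
`⟨φ, A(f)ψ⟩ = ∫_Γ f(x) ⟨φ, η_x⟩⟨η_x, ψ⟩ dμ(x)` for all `φ, ψ`, and its
operator norm satisfies `‖A(f)‖ ≤ sup_x |f(x)|`. -/
theorem exists_unique_quantization_operator
    (H : Type*) [NormedAddCommGroup H] [InnerProductSpace ℂ H] [CompleteSpace H]
    (Γ : Type*) [MeasurableSpace Γ] (μ : Measure Γ)
    (η : Γ → H)
    (hmeas : ∀ φ : H, Measurable fun x => ⟪η x, φ⟫_ℂ)
    (hnorm : ∀ x : Γ, ‖η x‖ ≤ 1)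
    (hres_int : ∀ φ ψ : H, Integrable (fun x => ⟪φ, η x⟫_ℂ * ⟪η x, ψ⟫_ℂ) μ)
    (hres : ∀ φ ψ : H, ∫ x, ⟪φ, η x⟫_ℂ * ⟪η x, ψ⟫_ℂ ∂μ = ⟪φ, ψ⟫_ℂ)
    (f : Γ → ℂ) (hf : Measurable f)
    (hfbdd : BddAbove (Set.range fun x => ‖f x‖)) :
    ∃ A : H →L[ℂ] H,
      (∀ φ ψ : H, ⟪φ, A ψ⟫_ℂ = ∫ x, f x * (⟪φ, η x⟫_ℂ * ⟪η x, ψ⟫_ℂ) ∂μ) ∧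
      ‖A‖ ≤ ⨆ x : Γ, ‖f x‖ ∧
      ∀ B : H →L[ℂ] H,
        (∀ φ ψ : H, ⟪φ, B ψ⟫_ℂ = ∫ x, f x * (⟪φ, η x⟫_ℂ * ⟪η x, ψ⟫_ℂ) ∂μ) → B = A := by
  classical
  set M := ⨆ x : Γ, ‖f x‖ with hMdef
  have hM0 : 0 ≤ M := Real.iSup_nonneg fun x => norm_nonneg _
  have hfM : ∀ x, ‖f x‖ ≤ M := fun x =>
    le_ciSup hfbdd x
  -- integrability of the main integrand
  have hint : ∀ φ ψ : H, Integrable (fun x => f x * (⟪φ, η x⟫_ℂ * ⟪η x, ψ⟫_ℂ)) μ := by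
    intro φ ψ
    exact (hres_int φ ψ).bdd_mul hf.aestronglyMeasurable (ae_of_all _ hfM)
  -- L² membership of coherent state transforms
  have hmem : ∀ φ : H, MemLp (fun x => ⟪η x, φ⟫_ℂ) 2 μ := by
    intro φ
    refine (memLp_two_iff_integrable_sq_norm (hmeas φ).aestronglyMeasurable).2 ?_
    refine ((hres_int φ φ).norm.congr (ae_of_all _ fun x => ?_))
    show ‖⟪φ, η x⟫_ℂ * ⟪η x, φ⟫_ℂ‖ = ‖⟪η x, φ⟫_ℂ‖ ^ 2
    rw [norm_mul, norm_inner_symm φ (η x)]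
    ring
  -- L² norm identity
  have hL2 : ∀ φ : H, ∫ x, ‖⟪η x, φ⟫_ℂ‖ ^ 2 ∂μ = ‖φ‖ ^ 2 := by
    intro φ
    have h1 := hres φ φ
    have h2 : (fun x => ⟪φ, η x⟫_ℂ * ⟪η x, φ⟫_ℂ)
        = fun x => ((‖⟪η x, φ⟫_ℂ‖ ^ 2 : ℝ) : ℂ) := by
      funext x
      rw [← inner_conj_symm φ (η x), Complex.conj_mul']
      push_cast
      ring
    rw [h2] at h1
    have h3 : ∫ x, ((‖⟪η x, φ⟫_ℂ‖ ^ 2 : ℝ) : ℂ) ∂μ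
        = ((∫ x, ‖⟪η x, φ⟫_ℂ‖ ^ 2 ∂μ : ℝ) : ℂ) := integral_ofReal
    rw [h3, inner_self_eq_norm_sq_to_K] at h1
    norm_cast at h1
    exact Complex.ofReal_injective h1
  -- Cauchy–Schwarz for integrals
  have hCS : ∀ φ ψ : H,
      ∫ x, ‖⟪η x, φ⟫_ℂ‖ * ‖⟪η x, ψ⟫_ℂ‖ ∂μ ≤ ‖φ‖ * ‖ψ‖ := by
    intro φ ψ
    have hpq : Real.HolderConjugate 2 2 := ⟨by norm_num, by norm_num, by norm_num⟩
    have := integral_mul_norm_le_Lp_mul_Lq (μ := μ) hpq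
      ((ENNReal.ofReal_ofNat 2 ▸ hmem φ)) ((ENNReal.ofReal_ofNat 2 ▸ hmem ψ))
    have e1 : ∫ x, ‖⟪η x, φ⟫_ℂ‖ ^ (2 : ℝ) ∂μ = ‖φ‖ ^ 2 := by
      rw [← hL2 φ]; congr 1; funext x
      rw [← Real.rpow_natCast ‖⟪η x, φ⟫_ℂ‖ 2]; norm_num
    have e2 : ∫ x, ‖⟪η x, ψ⟫_ℂ‖ ^ (2 : ℝ) ∂μ = ‖ψ‖ ^ 2 := by
      rw [← hL2 ψ]; congr 1; funext x
      rw [← Real.rpow_natCast ‖⟪η x, ψ⟫_ℂ‖ 2]; norm_num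
    rw [e1, e2] at this
    calc ∫ x, ‖⟪η x, φ⟫_ℂ‖ * ‖⟪η x, ψ⟫_ℂ‖ ∂μ
        ≤ (‖φ‖ ^ 2) ^ (1 / (2:ℝ)) * (‖ψ‖ ^ 2) ^ (1 / (2:ℝ)) := this
      _ = ‖φ‖ * ‖ψ‖ := by
          rw [← Real.rpow_natCast ‖φ‖ 2, ← Real.rpow_natCast ‖ψ‖ 2,
            ← Real.rpow_mul (norm_nonneg _), ← Real.rpow_mul (norm_nonneg _)]
          norm_num
  -- key bound
  have key : ∀ φ ψ : H,
      ‖∫ x, f x * (⟪φ, η x⟫_ℂ * ⟪η x, ψ⟫_ℂ) ∂μ‖ ≤ M * ‖φ‖ * ‖ψ‖ := by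
    intro φ ψ
    have hbd : ∀ x, ‖f x * (⟪φ, η x⟫_ℂ * ⟪η x, ψ⟫_ℂ)‖
        ≤ M * (‖⟪η x, φ⟫_ℂ‖ * ‖⟪η x, ψ⟫_ℂ‖) := by
      intro x
      rw [norm_mul, norm_mul, ← norm_inner_symm φ (η x)]
      exact mul_le_mul_of_nonneg_right (hfM x) (by positivity)
    have hRint : Integrable (fun x => M * (‖⟪η x, φ⟫_ℂ‖ * ‖⟪η x, ψ⟫_ℂ‖)) μ := by
      refine ((hres_int φ ψ).norm.congr (ae_of_all _ fun x => ?_)).const_mul M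
      show ‖⟪φ, η x⟫_ℂ * ⟪η x, ψ⟫_ℂ‖ = _
      rw [norm_mul, norm_inner_symm φ (η x)]
    calc ‖∫ x, f x * (⟪φ, η x⟫_ℂ * ⟪η x, ψ⟫_ℂ) ∂μ‖
        ≤ ∫ x, ‖f x * (⟪φ, η x⟫_ℂ * ⟪η x, ψ⟫_ℂ)‖ ∂μ := norm_integral_le_integral_norm _
      _ ≤ ∫ x, M * (‖⟪η x, φ⟫_ℂ‖ * ‖⟪η x, ψ⟫_ℂ‖) ∂μ :=
          integral_mono (hint φ ψ).norm hRint hbd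
      _ = M * ∫ x, ‖⟪η x, φ⟫_ℂ‖ * ‖⟪η x, ψ⟫_ℂ‖ ∂μ := integral_const_mul _ _
      _ ≤ M * (‖φ‖ * ‖ψ‖) := mul_le_mul_of_nonneg_left (hCS φ ψ) hM0
      _ = M * ‖φ‖ * ‖ψ‖ := by ring
  -- Riesz representation for each ψ
  have main : ∀ ψ : H, ∃ v : H,
      ∀ φ : H, ⟪φ, v⟫_ℂ = ∫ x, f x * (⟪φ, η x⟫_ℂ * ⟪η x, ψ⟫_ℂ) ∂μ := by
    intro ψ
    have ℓadd : ∀ φ₁ φ₂ : H,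
        (starRingEnd ℂ) (∫ x, f x * (⟪φ₁ + φ₂, η x⟫_ℂ * ⟪η x, ψ⟫_ℂ) ∂μ)
          = (starRingEnd ℂ) (∫ x, f x * (⟪φ₁, η x⟫_ℂ * ⟪η x, ψ⟫_ℂ) ∂μ)
            + (starRingEnd ℂ) (∫ x, f x * (⟪φ₂, η x⟫_ℂ * ⟪η x, ψ⟫_ℂ) ∂μ) := by
      intro φ₁ φ₂
      rw [← map_add]
      congr 1
      rw [← integral_add (hint φ₁ ψ) (hint φ₂ ψ)]
      congr 1; funext x; rw [inner_add_left]; ring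
    have ℓsmul : ∀ (c : ℂ) (φ : H),
        (starRingEnd ℂ) (∫ x, f x * (⟪c • φ, η x⟫_ℂ * ⟪η x, ψ⟫_ℂ) ∂μ)
          = c * (starRingEnd ℂ) (∫ x, f x * (⟪φ, η x⟫_ℂ * ⟪η x, ψ⟫_ℂ) ∂μ) := by
      intro c φ
      have : (fun x => f x * (⟪c • φ, η x⟫_ℂ * ⟪η x, ψ⟫_ℂ))
          = fun x => (starRingEnd ℂ) c * (f x * (⟪φ, η x⟫_ℂ * ⟪η x, ψ⟫_ℂ)) := by
        funext x; rw [inner_smul_left]; ring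
      rw [this, integral_const_mul, map_mul, Complex.conj_conj]
    let ℓ₀ : H →ₗ[ℂ] ℂ :=
      { toFun := fun φ => (starRingEnd ℂ) (∫ x, f x * (⟪φ, η x⟫_ℂ * ⟪η x, ψ⟫_ℂ) ∂μ)
        map_add' := ℓadd
        map_smul' := ℓsmul }
    have ℓbd : ∀ φ : H, ‖ℓ₀ φ‖ ≤ (M * ‖ψ‖) * ‖φ‖ := by
      intro φ
      show ‖(starRingEnd ℂ) _‖ ≤ _
      rw [RCLike.norm_conj]
      calc ‖∫ x, f x * (⟪φ, η x⟫_ℂ * ⟪η x, ψ⟫_ℂ) ∂μ‖ ≤ M * ‖φ‖ * ‖ψ‖ := key φ ψ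
        _ = (M * ‖ψ‖) * ‖φ‖ := by ring
    let ℓ : H →L[ℂ] ℂ := LinearMap.mkContinuous ℓ₀ (M * ‖ψ‖) ℓbd
    refine ⟨(InnerProductSpace.toDual ℂ H).symm ℓ, fun φ => ?_⟩
    rw [← inner_conj_symm, InnerProductSpace.toDual_symm_apply]
    show (starRingEnd ℂ) (ℓ₀ φ) = _
    simp only [ℓ₀, LinearMap.coe_mk, AddHom.coe_mk, Complex.conj_conj]
  choose g hg using main
  -- linearity of g
  have gadd : ∀ ψ₁ ψ₂ : H, g (ψ₁ + ψ₂) = g ψ₁ + g ψ₂ := by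
    intro ψ₁ ψ₂
    refine ext_inner_left ℂ fun φ => ?_
    rw [hg, inner_add_right, hg, hg, ← integral_add (hint φ ψ₁) (hint φ ψ₂)]
    congr 1; funext x; rw [inner_add_right]; ring
  have gsmul : ∀ (c : ℂ) (ψ : H), g (c • ψ) = c • g ψ := by
    intro c ψ
    refine ext_inner_left ℂ fun φ => ?_
    rw [hg, inner_smul_right, hg]
    have : (fun x => f x * (⟪φ, η x⟫_ℂ * ⟪η x, c • ψ⟫_ℂ))
        = fun x => c * (f x * (⟪φ, η x⟫_ℂ * ⟪η x, ψ⟫_ℂ)) := by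
      funext x; rw [inner_smul_right]; ring
    rw [this, integral_const_mul]
  -- bound on g
  have gbound : ∀ ψ : H, ‖g ψ‖ ≤ M * ‖ψ‖ := by
    intro ψ
    rcases eq_or_ne (g ψ) 0 with h | h
    · rw [h, norm_zero]; positivity
    · have h1 : ‖g ψ‖ * ‖g ψ‖ ≤ (M * ‖ψ‖) * ‖g ψ‖ := by
        have h2 := key (g ψ) ψ
        rw [← hg ψ (g ψ), inner_self_eq_norm_sq_to_K] at h2
        calc ‖g ψ‖ * ‖g ψ‖ = ‖((‖g ψ‖ : ℂ)) ^ 2‖ := by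
              rw [norm_pow, Complex.norm_real, Real.norm_eq_abs, abs_norm]; ring
          _ ≤ M * ‖g ψ‖ * ‖ψ‖ := h2
          _ = (M * ‖ψ‖) * ‖g ψ‖ := by ring
      exact le_of_mul_le_mul_right h1 (norm_pos_iff.2 h)
  let A : H →L[ℂ] H :=
    LinearMap.mkContinuous { toFun := g, map_add' := gadd, map_smul' := gsmul } M gbound
  have hA : ∀ φ ψ : H, ⟪φ, A ψ⟫_ℂ = ∫ x, f x * (⟪φ, η x⟫_ℂ * ⟪η x, ψ⟫_ℂ) ∂μ :=
    fun φ ψ => hg ψ φ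
  refine ⟨A, hA, LinearMap.mkContinuous_norm_le _ hM0 _, fun B hB => ?_⟩
  ext ψ
  refine ext_inner_left ℂ fun φ => ?_
  rw [hB, hA]
end

section
/- If H is separable and Δ ⊆ Γ is a measurable set with μ(Δ) < ∞, then the localization operator A(Δ) is a compact operator on H. -/
open MeasureTheory
open scoped InnerProductSpace

/-- Norm via a sequence dense in the unit ball. -/
lemma norm_eq_iSup_inner
    {H : Type*} [NormedAddCommGroup H] [InnerProductSpace ℂ H]
    (v : ℕ → H) (hv1 : ∀ k, ‖v k‖ ≤ 1)
    (hvd : ∀ w : H, ‖w‖ ≤ 1 → ∀ ε > 0, ∃ k, ‖v k - w‖ < ε)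
    (w : H) : ‖w‖ = ⨆ k, ‖⟪v k, w⟫_ℂ‖ := by
  have hbdd : BddAbove (Set.range fun k => ‖⟪v k, w⟫_ℂ‖) := by
    refine ⟨‖w‖, ?_⟩
    rintro _ ⟨k, rfl⟩
    calc ‖⟪v k, w⟫_ℂ‖ ≤ ‖v k‖ * ‖w‖ := norm_inner_le_norm _ _
      _ ≤ 1 * ‖w‖ := by gcongr; exact hv1 k
      _ = ‖w‖ := one_mul _
  refine le_antisymm ?_ ?_
  · rcases eq_or_ne w 0 with rfl | hw
    · simpa using le_trans (norm_nonneg (⟪v 0, (0:H)⟫_ℂ)) (le_ciSup hbdd 0)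
    · have hwpos : (0:ℝ) < ‖w‖ := norm_pos_iff.mpr hw
      refine le_of_forall_pos_le_add fun ε hε => ?_
      set u : H := ((‖w‖ : ℂ))⁻¹ • w with hu
      have hun : ‖u‖ = 1 := by
        rw [hu, norm_smul, norm_inv]
        simp only [Complex.norm_real, norm_norm]
        exact inv_mul_cancel₀ hwpos.ne'
      obtain ⟨k, hk⟩ := hvd u hun.le (ε / ‖w‖) (div_pos hε hwpos)
      have huw : ‖⟪u, w⟫_ℂ‖ = ‖w‖ := by
        rw [hu, inner_smul_left, inner_self_eq_norm_sq_to_K]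
        rw [norm_mul, norm_pow, map_inv₀, Complex.conj_ofReal, norm_inv]
        simp only [Complex.norm_real, norm_norm]
        field_simp
        simp
      have hsmall : ‖⟪v k - u, w⟫_ℂ‖ ≤ ε := by
        calc ‖⟪v k - u, w⟫_ℂ‖ ≤ ‖v k - u‖ * ‖w‖ := norm_inner_le_norm _ _
          _ ≤ (ε / ‖w‖) * ‖w‖ := mul_le_mul_of_nonneg_right hk.le (norm_nonneg w)
          _ = ε := by field_simp
      have hsplit : ⟪u, w⟫_ℂ = ⟪v k, w⟫_ℂ - ⟪v k - u, w⟫_ℂ := by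
        rw [← inner_sub_left]; congr 1; abel
      have h1 : ‖w‖ - ε ≤ ‖⟪v k, w⟫_ℂ‖ := by
        have := norm_sub_le (⟪v k, w⟫_ℂ) (⟪v k - u, w⟫_ℂ)
        rw [← hsplit, huw] at this
        linarith
      calc ‖w‖ ≤ ‖⟪v k, w⟫_ℂ‖ + ε := by linarith
        _ ≤ (⨆ k, ‖⟪v k, w⟫_ℂ‖) + ε := by gcongr; exact le_ciSup hbdd k
  · refine ciSup_le fun k => ?_
    calc ‖⟪v k, w⟫_ℂ‖ ≤ ‖v k‖ * ‖w‖ := norm_inner_le_norm _ _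
      _ ≤ 1 * ‖w‖ := by gcongr; exact hv1 k
      _ = ‖w‖ := one_mul _

/-- If `H` is separable and `Δ ⊆ Γ` is measurable with
`μ(Δ) < ∞`, then the localization operator `A(Δ)` is a compact operator. -/
theorem localization_operator_compact
    (H : Type*) [NormedAddCommGroup H] [InnerProductSpace ℂ H] [CompleteSpace H]
    [TopologicalSpace.SeparableSpace H]
    (Γ : Type*) [MeasurableSpace Γ] (μ : Measure Γ)
    (η : Γ → H)
    (hmeas : ∀ φ : H, Measurable fun x => ⟪η x, φ⟫_ℂ)
    (hnorm : ∀ x : Γ, ‖η x‖ ≤ 1)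
    (hres_int : ∀ φ ψ : H, Integrable (fun x => ⟪φ, η x⟫_ℂ * ⟪η x, ψ⟫_ℂ) μ)
    (hres : ∀ φ ψ : H, ∫ x, ⟪φ, η x⟫_ℂ * ⟪η x, ψ⟫_ℂ ∂μ = ⟪φ, ψ⟫_ℂ)
    (Δ : Set Γ) (hΔ : MeasurableSet Δ) (hΔfin : μ Δ < ⊤)
    -- the localization operator A(Δ) = A(χ_Δ)
    (AΔ : H →L[ℂ] H)
    (hAΔ : ∀ φ ψ : H,
      ⟪φ, AΔ ψ⟫_ℂ
        = ∫ x, Set.indicator Δ (fun _ => (1 : ℂ)) x * (⟪φ, η x⟫_ℂ * ⟪η x, ψ⟫_ℂ) ∂μ) :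
    IsCompactOperator AΔ := by
  classical
  haveI : SecondCountableTopology H := UniformSpace.secondCountable_of_separable H
  haveI : Nonempty H := ⟨0⟩
  -- a sequence dense in the closed unit ball
  obtain ⟨v, hv1, hvd⟩ : ∃ v : ℕ → H, (∀ k, ‖v k‖ ≤ 1) ∧
      ∀ w : H, ‖w‖ ≤ 1 → ∀ ε > 0, ∃ k, ‖v k - w‖ < ε := by
    haveI : Nonempty (Metric.closedBall (0:H) 1) := ⟨⟨0, by simp⟩⟩
    refine ⟨fun k => (TopologicalSpace.denseSeq (Metric.closedBall (0:H) 1) k : H),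
      fun k => ?_, fun w hw ε hε => ?_⟩
    · have := (TopologicalSpace.denseSeq (Metric.closedBall (0:H) 1) k).2
      rw [Metric.mem_closedBall, dist_zero_right] at this
      exact this
    · obtain ⟨k, hk⟩ := Metric.denseRange_iff.mp
        (TopologicalSpace.denseRange_denseSeq (Metric.closedBall (0:H) 1))
        ⟨w, by simpa [Metric.mem_closedBall, dist_eq_norm] using hw⟩ ε hε
      refine ⟨k, ?_⟩
      rw [Subtype.dist_eq, dist_comm, dist_eq_norm] at hk
      exact hk
  -- a dense sequence in H
  set d := TopologicalSpace.denseSeq H with hd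
  have hdd : DenseRange d := TopologicalSpace.denseRange_denseSeq H
  -- finite-dimensional subspaces
  set V : ℕ → Submodule ℂ H := fun n => Submodule.span ℂ (d '' Set.Iic n) with hV
  have hFD : ∀ n, FiniteDimensional ℂ (V n) := fun n =>
    FiniteDimensional.span_of_finite ℂ ((Set.finite_Iic n).image d)
  -- projections
  let P : ℕ → H →L[ℂ] H := fun n =>
    haveI := hFD n
    (V n).subtypeL.comp ((V n).orthogonalProjectionOnto)
  have hPapply : ∀ n w, P n w = (haveI := hFD n; ((V n).orthogonalProjectionOnto w : H)) :=
    fun n w => rfl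
  have hPmem : ∀ n w, P n w ∈ V n := fun n w => by
    haveI := hFD n
    rw [hPapply]
    exact Submodule.coe_mem _
  have hPid : ∀ n w, w ∈ V n → P n w = w := fun n w hw => by
    haveI := hFD n
    rw [hPapply]
    exact (Submodule.starProjection_eq_self_iff).mpr hw
  have hPsym : ∀ n (a b : H), ⟪P n a, b⟫_ℂ = ⟪a, P n b⟫_ℂ := fun n a b => by
    haveI := hFD n
    rw [hPapply, hPapply]
    exact Submodule.inner_starProjection_left_eq_right _ a b
  have hPle : ∀ n (w w' : H), w' ∈ V n → ‖w - P n w‖ ≤ ‖w - w'‖ := fun n w w' hw' => by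
    haveI := hFD n
    rw [hPapply, show ((V n).orthogonalProjectionOnto w : H) = (V n).starProjection w from rfl,
      Submodule.starProjection_minimal]
    exact ciInf_le_of_le ⟨0, by rintro _ ⟨x, rfl⟩; exact norm_nonneg _⟩ ⟨w', hw'⟩ le_rfl
  have htend : ∀ w : H, Filter.Tendsto (fun n => ‖w - P n w‖) Filter.atTop (nhds 0) := by
    intro w
    rw [Metric.tendsto_atTop]
    intro ε hε
    obtain ⟨k, hk⟩ := Metric.denseRange_iff.mp hdd w ε hε
    refine ⟨k, fun n hn => ?_⟩
    have hdk : d k ∈ V n := Submodule.subset_span ⟨k, hn, rfl⟩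
    have h1 : ‖w - P n w‖ ≤ ‖w - d k‖ := hPle n w (d k) hdk
    rw [dist_comm w (d k), dist_eq_norm] at hk
    rw [Real.dist_eq, sub_zero, abs_of_nonneg (norm_nonneg _)]
    rw [norm_sub_rev] at hk
    exact lt_of_le_of_lt h1 hk
  -- the tail functions
  set g : ℕ → Γ → ℝ := fun n x => ‖η x - P n (η x)‖ with hg
  have hgmeas : ∀ n, Measurable (g n) := by
    intro n
    have hrw : g n = fun x => ⨆ k, ‖⟪η x, v k - P n (v k)⟫_ℂ‖ := by
      funext x
      rw [hg]
      simp only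
      rw [norm_eq_iSup_inner v hv1 hvd (η x - P n (η x))]
      congr 1
      funext k
      rw [norm_inner_symm]
      congr 1
      rw [inner_sub_left, inner_sub_right]
      congr 1
      exact hPsym n (η x) (v k)
    rw [hrw]
    exact Measurable.iSup fun k => (hmeas _).norm
  have hgnonneg : ∀ n x, 0 ≤ g n x := fun n x => norm_nonneg _
  have hgle1 : ∀ n x, g n x ≤ 1 := by
    intro n x
    have := hPle n (η x) 0 (Submodule.zero_mem _)
    rw [sub_zero] at this
    exact le_trans this (hnorm x)
  -- the error sequence
  set c : ℕ → ℝ := fun n => ∫ x in Δ, g n x ∂μ with hc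
  have hc0 : ∀ n, 0 ≤ c n := fun n => integral_nonneg (fun x => hgnonneg n x)
  haveI hfin : IsFiniteMeasure (μ.restrict Δ) :=
    ⟨by rw [Measure.restrict_apply_univ]; exact hΔfin⟩
  have hgint : ∀ n, Integrable (g n) (μ.restrict Δ) := by
    intro n
    refine Integrable.mono' (integrable_const 1) (hgmeas n).aestronglyMeasurable ?_
    exact Filter.Eventually.of_forall fun x => by
      rw [Real.norm_of_nonneg (hgnonneg n x)]; exact hgle1 n x
  have hctend : Filter.Tendsto c Filter.atTop (nhds 0) := by
    have h := tendsto_integral_of_dominated_convergence (μ := μ.restrict Δ)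
      (F := fun n x => g n x) (f := fun _ => (0:ℝ)) (fun _ => (1:ℝ))
      (fun n => (hgmeas n).aestronglyMeasurable)
      (integrable_const 1)
      (fun n => Filter.Eventually.of_forall fun x => by
        rw [Real.norm_of_nonneg (hgnonneg n x)]; exact hgle1 n x)
      (Filter.Eventually.of_forall fun x => htend (η x))
    simpa using h
  -- key estimate
  have key : ∀ n (ψ : H), ‖AΔ ψ - P n (AΔ ψ)‖ ≤ c n * ‖ψ‖ := by
    intro n ψ
    set φ : H := AΔ ψ - P n (AΔ ψ) with hφ
    have hPφ : P n φ = 0 := by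
      rw [hφ, map_sub, hPid n (P n (AΔ ψ)) (hPmem n (AΔ ψ)), sub_self]
    have hφinner : ∀ w : H, ⟪φ, P n w⟫_ℂ = 0 := by
      intro w
      rw [← hPsym n φ w, hPφ, inner_zero_left]
    -- pointwise bound
    have hπt : ∀ x : Γ, ‖⟪φ, η x⟫_ℂ * ⟪η x, ψ⟫_ℂ‖ ≤ g n x * (‖φ‖ * ‖ψ‖) := by
      intro x
      have h1 : ⟪φ, η x⟫_ℂ = ⟪φ, η x - P n (η x)⟫_ℂ := by
        rw [inner_sub_right, hφinner (η x), sub_zero]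
      rw [norm_mul, h1]
      calc ‖⟪φ, η x - P n (η x)⟫_ℂ‖ * ‖⟪η x, ψ⟫_ℂ‖
          ≤ (‖φ‖ * ‖η x - P n (η x)‖) * (‖η x‖ * ‖ψ‖) := by
            exact mul_le_mul (norm_inner_le_norm _ _) (norm_inner_le_norm _ _)
              (norm_nonneg _) (by positivity)
        _ = (‖φ‖ * g n x) * (‖η x‖ * ‖ψ‖) := rfl
        _ ≤ (‖φ‖ * g n x) * (1 * ‖ψ‖) := by
            apply mul_le_mul_of_nonneg_left _ (mul_nonneg (norm_nonneg φ) (hgnonneg n x))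
            exact mul_le_mul_of_nonneg_right (hnorm x) (norm_nonneg ψ)
        _ = g n x * (‖φ‖ * ‖ψ‖) := by ring
    have h2 : ‖⟪φ, AΔ ψ⟫_ℂ‖ ≤ c n * (‖φ‖ * ‖ψ‖) := by
      rw [hAΔ φ ψ]
      have hrw : (fun x => Set.indicator Δ (fun _ => (1:ℂ)) x * (⟪φ, η x⟫_ℂ * ⟪η x, ψ⟫_ℂ))
          = Δ.indicator (fun x => ⟪φ, η x⟫_ℂ * ⟪η x, ψ⟫_ℂ) := by
        funext x
        by_cases hx : x ∈ Δ <;> simp [Set.indicator, hx]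
      rw [hrw, integral_indicator hΔ]
      calc ‖∫ x in Δ, ⟪φ, η x⟫_ℂ * ⟪η x, ψ⟫_ℂ ∂μ‖
          ≤ ∫ x in Δ, g n x * (‖φ‖ * ‖ψ‖) ∂μ := by
            refine norm_integral_le_of_norm_le ((hgint n).mul_const _) ?_
            exact Filter.Eventually.of_forall fun x => hπt x
        _ = c n * (‖φ‖ * ‖ψ‖) := by
            rw [hc]
            simp only
            rw [← integral_mul_const]
    have h3 : ‖φ‖ ^ 2 ≤ c n * (‖φ‖ * ‖ψ‖) := by
      have hself : ⟪φ, φ⟫_ℂ = ⟪φ, AΔ ψ⟫_ℂ := by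
        nth_rewrite 1 [hφ]
        rw [inner_sub_right, hφinner (AΔ ψ), sub_zero]
      have : (‖φ‖:ℝ) ^ 2 = ‖⟪φ, φ⟫_ℂ‖ := by
        rw [inner_self_eq_norm_sq_to_K]
        rw [norm_pow, RCLike.norm_ofReal, abs_norm]
      rw [this, hself]
      exact h2
    rcases eq_or_lt_of_le (norm_nonneg φ) with h0 | hpos
    · rw [← h0]
      exact mul_nonneg (hc0 n) (norm_nonneg ψ)
    · nlinarith [hpos, norm_nonneg ψ, hc0 n]
  -- operator norm bound and conclusion
  have hop : ∀ n, ‖AΔ - P n ∘L AΔ‖ ≤ c n := by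
    intro n
    refine ContinuousLinearMap.opNorm_le_bound _ (hc0 n) fun ψ => ?_
    simpa using key n ψ
  have hPA : Filter.Tendsto (fun n => P n ∘L AΔ) Filter.atTop (nhds AΔ) := by
    rw [tendsto_iff_norm_sub_tendsto_zero]
    refine squeeze_zero (fun n => norm_nonneg _) (fun n => ?_) hctend
    rw [norm_sub_rev]
    exact hop n
  refine isCompactOperator_of_tendsto hPA ?_
  refine Filter.Eventually.of_forall fun n => ?_
  -- each P n ∘L AΔ is a compact operator (finite rank)
  haveI := hFD n
  haveI : ProperSpace (V n) := FiniteDimensional.proper ℂ (V n)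
  refine ⟨(V n).subtypeL '' Metric.closedBall 0 (‖P n ∘L AΔ‖), ?_, ?_⟩
  · exact (isCompact_closedBall _ _).image (V n).subtypeL.continuous
  · refine Filter.mem_of_superset (Metric.ball_mem_nhds 0 one_pos) ?_
    intro ψ hψ
    refine ⟨(V n).orthogonalProjectionOnto (AΔ ψ), ?_, rfl⟩
    rw [Metric.mem_closedBall, dist_zero_right]
    have h1 : ‖(V n).orthogonalProjectionOnto (AΔ ψ)‖ = ‖(P n ∘L AΔ) ψ‖ := rfl
    rw [h1]
    calc ‖(P n ∘L AΔ) ψ‖ ≤ ‖P n ∘L AΔ‖ * ‖ψ‖ := (P n ∘L AΔ).le_opNorm ψ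
      _ ≤ ‖P n ∘L AΔ‖ * 1 := by
          apply mul_le_mul_of_nonneg_left _ (norm_nonneg _)
          exact le_of_lt (by simpa [dist_zero_right] using hψ)
      _ = ‖P n ∘L AΔ‖ := mul_one _
end

section
/- If H is separable with orthonormal Hilbert basis (e_i)_{i ∈ I} and Δ ⊆ Γ is a measurable set with μ(Δ) < ∞, then the trace of the localization operator is bounded by the phase-space volume: Σ_{i ∈ I} ⟨e_i, A(Δ) e_i⟩ = ∫_Δ ‖η_x‖² dμ(x) ≤ μ(Δ). -/
open MeasureTheory
open scoped InnerProductSpace ENNReal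

/-- If `H` is separable with orthonormal Hilbert basis `(e_i)`
and `μ(Δ) < ∞`, then the trace of the localization operator is bounded by the
phase-space volume: `Σᵢ ⟨e_i, A(Δ) e_i⟩ = ∫_Δ ‖η_x‖² dμ(x) ≤ μ(Δ)`. -/
theorem localization_operator_trace_le_volume
    (H : Type*) [NormedAddCommGroup H] [InnerProductSpace ℂ H] [CompleteSpace H]
    [TopologicalSpace.SeparableSpace H]
    (Γ : Type*) [MeasurableSpace Γ] (μ : Measure Γ)
    (η : Γ → H)
    (hmeas : ∀ φ : H, Measurable fun x => ⟪η x, φ⟫_ℂ)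
    (hnorm : ∀ x : Γ, ‖η x‖ ≤ 1)
    (hres_int : ∀ φ ψ : H, Integrable (fun x => ⟪φ, η x⟫_ℂ * ⟪η x, ψ⟫_ℂ) μ)
    (hres : ∀ φ ψ : H, ∫ x, ⟪φ, η x⟫_ℂ * ⟪η x, ψ⟫_ℂ ∂μ = ⟪φ, ψ⟫_ℂ)
    (ι : Type*) (e : HilbertBasis ι ℂ H)
    (Δ : Set Γ) (hΔ : MeasurableSet Δ) (hΔfin : μ Δ < ⊤)
    -- the localization operator A(Δ) = A(χ_Δ)
    (AΔ : H →L[ℂ] H)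
    (hAΔ : ∀ φ ψ : H,
      ⟪φ, AΔ ψ⟫_ℂ
        = ∫ x, Set.indicator Δ (fun _ => (1 : ℂ)) x * (⟪φ, η x⟫_ℂ * ⟪η x, ψ⟫_ℂ) ∂μ) :
    HasSum (fun i => ⟪e i, AΔ (e i)⟫_ℂ) ((∫ x in Δ, ‖η x‖ ^ 2 ∂μ : ℝ) : ℂ) ∧
    ∫ x in Δ, ‖η x‖ ^ 2 ∂μ ≤ (μ Δ).toReal := by
  classical
  have horth := e.orthonormal
  -- ι is countable
  haveI hcount : Countable ι := by
    have hdist : ∀ i j : ι, i ≠ j → (1 : ℝ) ≤ dist (e i) (e j) := by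
      intro i j hij
      have h2 : ‖e i - e j‖ ^ 2 = 2 := by
        rw [@norm_sub_sq ℂ, horth.1 i, horth.1 j, horth.2 hij]
        norm_num
      have hge : (0 : ℝ) ≤ ‖e i - e j‖ := norm_nonneg _
      rw [dist_eq_norm]
      nlinarith
    have hd : Pairwise (Function.onFun Disjoint fun i => Metric.ball (e i) (1 / 2)) := by
      intro i j hij
      have := hdist i j hij
      exact Metric.ball_disjoint_ball (by linarith)
    exact hd.countable_of_isOpen_disjoint (fun i => Metric.isOpen_ball)
      (fun i => Metric.nonempty_ball.2 (by norm_num))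
  -- pointwise helpers
  have hconj : ∀ (x : Γ) (i : ι),
      ⟪e i, η x⟫_ℂ * ⟪η x, e i⟫_ℂ = ((‖⟪η x, e i⟫_ℂ‖ ^ 2 : ℝ) : ℂ) := by
    intro x i
    rw [← inner_conj_symm (η x) (e i), Complex.mul_conj', RCLike.norm_conj]
    push_cast; ring
  -- Parseval
  have hParseval : ∀ x : Γ, HasSum (fun i => ‖⟪η x, e i⟫_ℂ‖ ^ 2) (‖η x‖ ^ 2) := by
    intro x
    have h := e.hasSum_inner_mul_inner (η x) (η x)
    have heq : (fun i => ⟪η x, e i⟫_ℂ * ⟪e i, η x⟫_ℂ)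
        = fun i => ((‖⟪η x, e i⟫_ℂ‖ ^ 2 : ℝ) : ℂ) := by
      funext i
      rw [← inner_conj_symm (e i) (η x), Complex.mul_conj']
      push_cast; ring
    rw [heq] at h
    have hself : ⟪η x, η x⟫_ℂ = ((‖η x‖ ^ 2 : ℝ) : ℂ) := by
      exact_mod_cast inner_self_eq_norm_sq_to_K (𝕜 := ℂ) (η x)
    rw [hself] at h
    exact Complex.hasSum_ofReal.mp h
  -- ENNReal versions
  set g : ι → Γ → ℝ≥0∞ := fun i x => ENNReal.ofReal (‖⟪η x, e i⟫_ℂ‖ ^ 2) with hg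
  have hgmeas : ∀ i, Measurable (g i) := fun i =>
    ((hmeas (e i)).norm.pow_const 2).ennreal_ofReal
  have hsumg : ∀ x : Γ, ∑' i, g i x = ENNReal.ofReal (‖η x‖ ^ 2) := by
    intro x
    rw [← ENNReal.ofReal_tsum_of_nonneg (fun i => by positivity) (hParseval x).summable,
      (hParseval x).tsum_eq]
  -- key lintegral identity
  have hkey : ∑' i, ∫⁻ x in Δ, g i x ∂μ = ∫⁻ x in Δ, ENNReal.ofReal (‖η x‖ ^ 2) ∂μ := by
    rw [← lintegral_tsum (fun i => (hgmeas i).aemeasurable)]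
    exact lintegral_congr fun x => hsumg x
  -- the total lintegral is bounded by μ Δ
  have hT_le : ∫⁻ x in Δ, ENNReal.ofReal (‖η x‖ ^ 2) ∂μ ≤ μ Δ := by
    calc ∫⁻ x in Δ, ENNReal.ofReal (‖η x‖ ^ 2) ∂μ
        ≤ ∫⁻ _ in Δ, 1 ∂μ := by
          refine lintegral_mono fun x => ?_
          exact ENNReal.ofReal_le_one.2 (pow_le_one₀ (norm_nonneg _) (hnorm x))
      _ = μ Δ := by simp
  have hT_ne : ∫⁻ x in Δ, ENNReal.ofReal (‖η x‖ ^ 2) ∂μ ≠ ⊤ :=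
    (lt_of_le_of_lt hT_le hΔfin).ne
  -- measurability of ‖η x‖²
  have hη2meas : Measurable fun x => ‖η x‖ ^ 2 := by
    have heq : (fun x => ‖η x‖ ^ 2) = fun x => (∑' i, g i x).toReal := by
      funext x
      rw [hsumg x, ENNReal.toReal_ofReal (by positivity)]
    rw [heq]
    exact ENNReal.measurable_toReal.comp (Measurable.ennreal_tsum hgmeas)
  -- Bochner integrals as lintegrals
  have hInt : ∫ x in Δ, ‖η x‖ ^ 2 ∂μ
      = (∫⁻ x in Δ, ENNReal.ofReal (‖η x‖ ^ 2) ∂μ).toReal := by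
    rw [integral_eq_lintegral_of_nonneg_ae (Filter.Eventually.of_forall fun x => by positivity)
      hη2meas.aestronglyMeasurable]
  have hInt_i : ∀ i, ∫ x in Δ, ‖⟪η x, e i⟫_ℂ‖ ^ 2 ∂μ = (∫⁻ x in Δ, g i x ∂μ).toReal := by
    intro i
    rw [integral_eq_lintegral_of_nonneg_ae (Filter.Eventually.of_forall fun x => by positivity)
      ((hmeas (e i)).norm.pow_const 2).aestronglyMeasurable]
  -- real HasSum
  have hRealSum : HasSum (fun i => ∫ x in Δ, ‖⟪η x, e i⟫_ℂ‖ ^ 2 ∂μ)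
      (∫ x in Δ, ‖η x‖ ^ 2 ∂μ) := by
    have hfin : ∀ i, ∫⁻ x in Δ, g i x ∂μ ≠ ⊤ := by
      intro i
      refine ne_top_of_le_ne_top hT_ne ?_
      rw [← hkey]
      exact ENNReal.le_tsum i
    have hsummable : Summable fun i => (∫⁻ x in Δ, g i x ∂μ).toReal := by
      refine ENNReal.summable_toReal ?_
      rw [hkey]; exact hT_ne
    have htsum : ∑' i, (∫⁻ x in Δ, g i x ∂μ).toReal
        = (∫⁻ x in Δ, ENNReal.ofReal (‖η x‖ ^ 2) ∂μ).toReal := by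
      rw [← hkey, ENNReal.tsum_toReal_eq hfin]
    have h := hsummable.hasSum
    rw [htsum] at h
    have heq : (fun i => ∫ x in Δ, ‖⟪η x, e i⟫_ℂ‖ ^ 2 ∂μ)
        = fun i => (∫⁻ x in Δ, g i x ∂μ).toReal := funext hInt_i
    rw [heq, hInt]
    exact h
  -- diagonal matrix elements
  have hdiag : ∀ i, ⟪e i, AΔ (e i)⟫_ℂ = ((∫ x in Δ, ‖⟪η x, e i⟫_ℂ‖ ^ 2 ∂μ : ℝ) : ℂ) := by
    intro i
    rw [hAΔ]
    have hind : (fun x => Set.indicator Δ (fun _ => (1 : ℂ)) x * (⟪e i, η x⟫_ℂ * ⟪η x, e i⟫_ℂ))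
        = Set.indicator Δ (fun x => ⟪e i, η x⟫_ℂ * ⟪η x, e i⟫_ℂ) := by
      funext x
      by_cases hx : x ∈ Δ <;> simp [Set.indicator_of_mem, Set.indicator_of_notMem, hx]
    rw [hind, integral_indicator hΔ]
    calc ∫ x in Δ, ⟪e i, η x⟫_ℂ * ⟪η x, e i⟫_ℂ ∂μ
        = ∫ x in Δ, ((‖⟪η x, e i⟫_ℂ‖ ^ 2 : ℝ) : ℂ) ∂μ :=
          integral_congr_ae (Filter.Eventually.of_forall fun x => hconj x i)
      _ = ((∫ x in Δ, ‖⟪η x, e i⟫_ℂ‖ ^ 2 ∂μ : ℝ) : ℂ) :=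
          integral_ofReal (f := fun x => ‖⟪η x, e i⟫_ℂ‖ ^ 2)
  constructor
  · have := Complex.hasSum_ofReal.mpr hRealSum
    simpa [hdiag] using this
  · rw [hInt]
    exact ENNReal.toReal_mono hΔfin.ne hT_le
end

section
/- Channel capacity / localization bound: let Δ ⊆ Γ be measurable with μ(Δ) < ∞, let 0 < ε < 1, and let ψ₁, …, ψ_N be a finite orthonormal family in H such that each ψ_i is localized in Δ up to ε, i.e. ⟨ψ_i, A(Δ) ψ_i⟩ ≥ 1 − ε for i = 1, …, N. Then N · (1 − ε) ≤ μ(Δ); in particular at most μ(Δ)/(1 − ε) mutually orthogonal unit vectors can be so localized. -/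
open MeasureTheory
open scoped InnerProductSpace

/-- Channel capacity / localization bound. If `ψ₁, …, ψ_N` is an
orthonormal family in `H` with `⟨ψ_i, A(Δ)ψ_i⟩ ≥ 1 − ε` for each `i`
(each `ψ_i` is localized in `Δ` up to `ε`, `0 < ε < 1`), then
`N·(1 − ε) ≤ μ(Δ)`. -/
theorem channel_capacity_bound
    (H : Type*) [NormedAddCommGroup H] [InnerProductSpace ℂ H] [CompleteSpace H]
    (Γ : Type*) [MeasurableSpace Γ] (μ : Measure Γ)
    (η : Γ → H)
    (hmeas : ∀ φ : H, Measurable fun x => ⟪η x, φ⟫_ℂ)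
    (hnorm : ∀ x : Γ, ‖η x‖ ≤ 1)
    (hres_int : ∀ φ ψ : H, Integrable (fun x => ⟪φ, η x⟫_ℂ * ⟪η x, ψ⟫_ℂ) μ)
    (hres : ∀ φ ψ : H, ∫ x, ⟪φ, η x⟫_ℂ * ⟪η x, ψ⟫_ℂ ∂μ = ⟪φ, ψ⟫_ℂ)
    (Δ : Set Γ) (hΔ : MeasurableSet Δ) (hΔfin : μ Δ < ⊤)
    -- the localization operator A(Δ) = A(χ_Δ)
    (AΔ : H →L[ℂ] H)
    (hAΔ : ∀ φ ψ : H,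
      ⟪φ, AΔ ψ⟫_ℂ
        = ∫ x, Set.indicator Δ (fun _ => (1 : ℂ)) x * (⟪φ, η x⟫_ℂ * ⟪η x, ψ⟫_ℂ) ∂μ)
    (ε : ℝ) (hε0 : 0 < ε) (hε1 : ε < 1)
    (N : ℕ) (ψ : Fin N → H) (hortho : Orthonormal ℂ ψ)
    (hloc : ∀ i : Fin N, 1 - ε ≤ (⟪ψ i, AΔ (ψ i)⟫_ℂ).re) :
    (N : ℝ) * (1 - ε) ≤ (μ Δ).toReal := by
  -- real integrand
  set f : Fin N → Γ → ℝ := fun i x =>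
    Set.indicator Δ (fun _ => ‖⟪η x, ψ i⟫_ℂ‖ ^ 2) x with hf
  have hptwise : ∀ i x,
      (Set.indicator Δ (fun _ => (1 : ℂ)) x * (⟪ψ i, η x⟫_ℂ * ⟪η x, ψ i⟫_ℂ)) =
        ((f i x : ℝ) : ℂ) := by
    intro i x
    by_cases hx : x ∈ Δ
    · simp only [hf, Set.indicator_of_mem hx, one_mul]
      rw [← inner_conj_symm (η x) (ψ i), Complex.mul_conj, RCLike.norm_conj]
      rw [Complex.normSq_eq_norm_sq]
    · simp [hf, Set.indicator_of_notMem hx]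
  have hint : ∀ i, Integrable (f i) μ := by
    intro i
    have h1 : Integrable
        (fun x => Set.indicator Δ (fun _ => (1 : ℂ)) x * (⟪ψ i, η x⟫_ℂ * ⟪η x, ψ i⟫_ℂ)) μ := by
      have := (hres_int (ψ i) (ψ i)).indicator hΔ
      refine this.congr (Filter.Eventually.of_forall fun x => ?_)
      by_cases hx : x ∈ Δ <;> simp [Set.indicator, hx]
    have h2 : Integrable (fun x => ((f i x : ℝ) : ℂ)) μ := by
      refine h1.congr (Filter.Eventually.of_forall fun x => hptwise i x)
    simpa using h2.re
  have hre : ∀ i, (⟪ψ i, AΔ (ψ i)⟫_ℂ).re = ∫ x, f i x ∂μ := by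
    intro i
    rw [hAΔ]
    have : (∫ x, Set.indicator Δ (fun _ => (1:ℂ)) x * (⟪ψ i, η x⟫_ℂ * ⟪η x, ψ i⟫_ℂ) ∂μ)
        = ∫ x, ((f i x : ℝ) : ℂ) ∂μ := by
      exact integral_congr_ae (Filter.Eventually.of_forall fun x => hptwise i x)
    rw [this]
    have h3 : (∫ x, ((f i x : ℝ) : ℂ) ∂μ) = ((∫ x, f i x ∂μ : ℝ) : ℂ) :=
      integral_ofReal (𝕜 := ℂ)
    rw [h3, Complex.ofReal_re]
  -- Bessel bound pointwise
  have hbessel : ∀ x, ∑ i, f i x ≤ Set.indicator Δ (fun _ => (1 : ℝ)) x := by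
    intro x
    by_cases hx : x ∈ Δ
    · simp only [hf, Set.indicator_of_mem hx]
      have h1 : ∑ i, ‖⟪η x, ψ i⟫_ℂ‖ ^ 2 ≤ ‖η x‖ ^ 2 := by
        have := hortho.sum_inner_products_le (s := Finset.univ) (η x)
        calc ∑ i, ‖⟪η x, ψ i⟫_ℂ‖ ^ 2
            = ∑ i, ‖⟪ψ i, η x⟫_ℂ‖ ^ 2 := by
              refine Finset.sum_congr rfl fun i _ => ?_
              rw [← inner_conj_symm (ψ i) (η x), RCLike.norm_conj]
          _ ≤ ‖η x‖ ^ 2 := this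
      refine h1.trans ?_
      have := hnorm x
      nlinarith [norm_nonneg (η x)]
    · simp [hf, Set.indicator_of_notMem hx]
  have hsum : ∑ i, (∫ x, f i x ∂μ) ≤ (μ Δ).toReal := by
    rw [← integral_finset_sum _ (fun i _ => hint i)]
    have hI : Integrable (Set.indicator Δ (fun _ => (1:ℝ))) μ :=
      (integrable_indicator_iff hΔ).2 (integrableOn_const hΔfin.ne)
    calc ∫ x, ∑ i, f i x ∂μ ≤ ∫ x, Set.indicator Δ (fun _ => (1:ℝ)) x ∂μ := by
          refine integral_mono (integrable_finset_sum _ (fun i _ => hint i)) hI hbessel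
      _ = (μ Δ).toReal := by
          rw [integral_indicator_const _ hΔ]; simp; rfl
  calc (N : ℝ) * (1 - ε) = ∑ _i : Fin N, (1 - ε) := by simp [mul_comm]; ring
    _ ≤ ∑ i, (⟪ψ i, AΔ (ψ i)⟫_ℂ).re := Finset.sum_le_sum fun i _ => hloc i
    _ = ∑ i, (∫ x, f i x ∂μ) := Finset.sum_congr rfl fun i _ => hre i
    _ ≤ (μ Δ).toReal := hsum
end

section
/- Uncertainty relation for phase-space localization: let Δ ⊆ Γ be measurable with μ(Δ) < ∞. If λ is an eigenvalue of A(Δ) with a nonzero eigenvector (A(Δ)ψ = λψ, ψ ≠ 0), then 0 ≤ λ ≤ min(1, μ(Δ)). In particular, if μ(Δ) < 1 then no state is localized in Δ with eigenvalue 1: it is impossible to localize a quantum system in an arbitrarily small phase-space volume. -/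
open MeasureTheory
open scoped InnerProductSpace ComplexOrder

/-- Uncertainty relation for phase-space localization. If `λ` is
an eigenvalue of `A(Δ)` with a nonzero eigenvector, then
`0 ≤ λ ≤ min(1, μ(Δ))`. In particular, if `μ(Δ) < 1` no state is localized in
`Δ` with eigenvalue `1`: one cannot localize a quantum system in an
arbitrarily small phase-space volume. -/
theorem localization_eigenvalue_bound
    (H : Type*) [NormedAddCommGroup H] [InnerProductSpace ℂ H] [CompleteSpace H]
    (Γ : Type*) [MeasurableSpace Γ] (μ : Measure Γ)
    (η : Γ → H)
    (hmeas : ∀ φ : H, Measurable fun x => ⟪η x, φ⟫_ℂ)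
    (hnorm : ∀ x : Γ, ‖η x‖ ≤ 1)
    (hres_int : ∀ φ ψ : H, Integrable (fun x => ⟪φ, η x⟫_ℂ * ⟪η x, ψ⟫_ℂ) μ)
    (hres : ∀ φ ψ : H, ∫ x, ⟪φ, η x⟫_ℂ * ⟪η x, ψ⟫_ℂ ∂μ = ⟪φ, ψ⟫_ℂ)
    (Δ : Set Γ) (hΔ : MeasurableSet Δ) (hΔfin : μ Δ < ⊤)
    -- the localization operator A(Δ) = A(χ_Δ)
    (AΔ : H →L[ℂ] H)
    (hAΔ : ∀ φ ψ : H,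
      ⟪φ, AΔ ψ⟫_ℂ
        = ∫ x, Set.indicator Δ (fun _ => (1 : ℂ)) x * (⟪φ, η x⟫_ℂ * ⟪η x, ψ⟫_ℂ) ∂μ)
    (lam : ℂ) (ψ : H) (hψ : ψ ≠ 0) (heig : AΔ ψ = lam • ψ) :
    0 ≤ lam ∧ lam ≤ ((min 1 (μ Δ).toReal : ℝ) : ℂ) := by
  set f : Γ → ℝ := fun x => ‖⟪η x, ψ⟫_ℂ‖ ^ 2 with hf
  -- the complex integrand equals the real square pointwise
  have hpt : ∀ x : Γ, ⟪ψ, η x⟫_ℂ * ⟪η x, ψ⟫_ℂ = ((f x : ℝ) : ℂ) := by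
    intro x
    rw [← inner_conj_symm (η x) ψ, Complex.mul_conj']
    push_cast
    rw [norm_inner_symm]
    norm_cast
  have hf_int : Integrable f μ := by
    have := (hres_int ψ ψ).norm
    refine this.congr ?_
    filter_upwards with x
    rw [hpt x, Complex.norm_real]
    exact abs_of_nonneg (sq_nonneg _)
  have hf_nonneg : ∀ x, 0 ≤ f x := fun x => sq_nonneg _
  have hf_le : ∀ x, f x ≤ ‖ψ‖ ^ 2 := by
    intro x
    have h1 : ‖⟪η x, ψ⟫_ℂ‖ ≤ ‖η x‖ * ‖ψ‖ := norm_inner_le_norm _ _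
    have h2 : ‖η x‖ * ‖ψ‖ ≤ 1 * ‖ψ‖ :=
      mul_le_mul_of_nonneg_right (hnorm x) (norm_nonneg _)
    have : ‖⟪η x, ψ⟫_ℂ‖ ≤ ‖ψ‖ := h1.trans (by linarith)
    calc f x = ‖⟪η x, ψ⟫_ℂ‖ ^ 2 := rfl
      _ ≤ ‖ψ‖ ^ 2 := pow_le_pow_left₀ (norm_nonneg _) this 2
  -- total integral of f is ‖ψ‖²
  have hf_total : ∫ x, f x ∂μ = ‖ψ‖ ^ 2 := by
    have h1 : ∫ x, ⟪ψ, η x⟫_ℂ * ⟪η x, ψ⟫_ℂ ∂μ = ((‖ψ‖ ^ 2 : ℝ) : ℂ) := by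
      rw [hres ψ ψ, inner_self_eq_norm_sq_to_K]; norm_cast
    have h2 : ∫ x, ⟪ψ, η x⟫_ℂ * ⟪η x, ψ⟫_ℂ ∂μ = ((∫ x, f x ∂μ : ℝ) : ℂ) := by
      rw [show (fun x => ⟪ψ, η x⟫_ℂ * ⟪η x, ψ⟫_ℂ) = fun x => ((f x : ℝ) : ℂ) from
        funext hpt]
      exact integral_ofReal
    exact_mod_cast h2.symm.trans h1
  set g : Γ → ℝ := Set.indicator Δ f with hg
  have hg_int : Integrable g μ := hf_int.indicator hΔ
  have hg_nonneg : 0 ≤ ∫ x, g x ∂μ :=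
    integral_nonneg fun x => Set.indicator_nonneg (fun y _ => hf_nonneg y) x
  have hg_le_f : ∫ x, g x ∂μ ≤ ‖ψ‖ ^ 2 := by
    rw [← hf_total]
    refine integral_mono hg_int hf_int fun x => ?_
    exact Set.indicator_le_self' (fun y _ => hf_nonneg y) x
  have hconst_int : Integrable (Set.indicator Δ fun _ => ‖ψ‖ ^ 2) μ := by
    exact (integrable_indicator_iff hΔ).mpr
      ((integrableOn_const_iff (C := ‖ψ‖ ^ 2)).mpr (Or.inr hΔfin))
  have hg_le_meas : ∫ x, g x ∂μ ≤ (μ Δ).toReal * ‖ψ‖ ^ 2 := by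
    have hmono : ∫ x, g x ∂μ ≤ ∫ x, Set.indicator Δ (fun _ => ‖ψ‖ ^ 2) x ∂μ := by
      refine integral_mono hg_int hconst_int fun x => ?_
      exact Set.indicator_le_indicator (hf_le x)
    have hconst : ∫ x, Set.indicator Δ (fun _ => ‖ψ‖ ^ 2) x ∂μ
        = (μ Δ).toReal * ‖ψ‖ ^ 2 := by
      rw [integral_indicator_const _ hΔ]; simp [smul_eq_mul, measureReal_def]
    linarith [hmono, hconst.le, hconst.ge]
  -- compute ⟪ψ, AΔ ψ⟫ two ways
  have hkey : lam * ((‖ψ‖ ^ 2 : ℝ) : ℂ) = ((∫ x, g x ∂μ : ℝ) : ℂ) := by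
    have h1 : ⟪ψ, AΔ ψ⟫_ℂ = lam * ((‖ψ‖ ^ 2 : ℝ) : ℂ) := by
      rw [heig, inner_smul_right, inner_self_eq_norm_sq_to_K]; norm_cast
    have h2 : ⟪ψ, AΔ ψ⟫_ℂ = ((∫ x, g x ∂μ : ℝ) : ℂ) := by
      rw [hAΔ ψ ψ]
      have : (fun x => Set.indicator Δ (fun _ => (1 : ℂ)) x * (⟪ψ, η x⟫_ℂ * ⟪η x, ψ⟫_ℂ))
          = fun x => ((g x : ℝ) : ℂ) := by
        funext x
        by_cases hx : x ∈ Δ <;>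
          simp [hg, Set.indicator_of_mem, Set.indicator_of_notMem, hx, hpt x]
      rw [this]
      exact integral_ofReal
    exact h1.symm.trans h2
  have hψ2 : (0 : ℝ) < ‖ψ‖ ^ 2 := by
    have := norm_pos_iff.mpr hψ; positivity
  have hlam : lam = (((∫ x, g x ∂μ) / ‖ψ‖ ^ 2 : ℝ) : ℂ) := by
    have hne : ((‖ψ‖ ^ 2 : ℝ) : ℂ) ≠ 0 := by exact_mod_cast hψ2.ne'
    rw [Complex.ofReal_div, eq_div_iff hne, hkey]
  set r : ℝ := (∫ x, g x ∂μ) / ‖ψ‖ ^ 2 with hr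
  have hr0 : 0 ≤ r := div_nonneg hg_nonneg hψ2.le
  have hr1 : r ≤ 1 := by
    rw [hr, div_le_one hψ2]; exact hg_le_f
  have hr2 : r ≤ (μ Δ).toReal := by
    rw [hr, div_le_iff₀ hψ2]; exact hg_le_meas
  constructor
  · rw [hlam]; exact_mod_cast Complex.zero_le_real.mpr hr0
  · rw [hlam]
    exact_mod_cast Complex.real_le_real.mpr (le_min hr1 hr2)
end

section
/- Support localization of eigenvectors: let Δ ⊆ Γ be measurable. If A(Δ)ψ = ψ then ⟨η_x, ψ⟩ = 0 for μ-almost every x ∉ Δ; and if A(Δ)ψ = 0 then ⟨η_x, ψ⟩ = 0 for μ-almost every x ∈ Δ. -/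
open MeasureTheory
open scoped InnerProductSpace

/-- Support localization of eigenvectors. If `A(Δ)ψ = ψ` then
`⟨η_x, ψ⟩ = 0` for μ-almost every `x ∉ Δ`; if `A(Δ)ψ = 0` then `⟨η_x, ψ⟩ = 0`
for μ-almost every `x ∈ Δ`. -/
theorem localization_eigenvector_support
    (H : Type*) [NormedAddCommGroup H] [InnerProductSpace ℂ H] [CompleteSpace H]
    (Γ : Type*) [MeasurableSpace Γ] (μ : Measure Γ)
    (η : Γ → H)
    (hmeas : ∀ φ : H, Measurable fun x => ⟪η x, φ⟫_ℂ)
    (hnorm : ∀ x : Γ, ‖η x‖ ≤ 1)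
    (hres_int : ∀ φ ψ : H, Integrable (fun x => ⟪φ, η x⟫_ℂ * ⟪η x, ψ⟫_ℂ) μ)
    (hres : ∀ φ ψ : H, ∫ x, ⟪φ, η x⟫_ℂ * ⟪η x, ψ⟫_ℂ ∂μ = ⟪φ, ψ⟫_ℂ)
    (Δ : Set Γ) (hΔ : MeasurableSet Δ)
    -- the localization operator A(Δ) = A(χ_Δ)
    (AΔ : H →L[ℂ] H)
    (hAΔ : ∀ φ ψ : H,
      ⟪φ, AΔ ψ⟫_ℂ
        = ∫ x, Set.indicator Δ (fun _ => (1 : ℂ)) x * (⟪φ, η x⟫_ℂ * ⟪η x, ψ⟫_ℂ) ∂μ)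
    (ψ : H) :
    (AΔ ψ = ψ → ∀ᵐ x ∂μ, x ∉ Δ → ⟪η x, ψ⟫_ℂ = 0) ∧
    (AΔ ψ = 0 → ∀ᵐ x ∂μ, x ∈ Δ → ⟪η x, ψ⟫_ℂ = 0) := by
  set c : Γ → ℂ := fun x => ⟪η x, ψ⟫_ℂ with hc
  set g : Γ → ℝ := fun x => Complex.normSq (c x) with hg
  have hconj : ∀ x, ⟪ψ, η x⟫_ℂ = starRingEnd ℂ (c x) := fun x => by
    simp [hc, inner_conj_symm]
  have hfre : ∀ x, (⟪ψ, η x⟫_ℂ * ⟪η x, ψ⟫_ℂ) = ((g x : ℝ) : ℂ) := by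
    intro x
    rw [hconj x]
    simp [hg, Complex.normSq_eq_conj_mul_self]
    exact Or.inl rfl
  have hg_int : Integrable g μ := by
    have := (hres_int ψ ψ).re
    refine this.congr (Filter.Eventually.of_forall fun x => ?_)
    simp only [hfre]
    simp
  have hind : ∀ x, Set.indicator Δ (fun _ => (1 : ℂ)) x * (⟪ψ, η x⟫_ℂ * ⟪η x, ψ⟫_ℂ)
      = ((Δ.indicator g x : ℝ) : ℂ) := by
    intro x
    by_cases hx : x ∈ Δ
    · rw [Set.indicator_of_mem hx, Set.indicator_of_mem hx, one_mul, hfre x]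
    · rw [Set.indicator_of_notMem hx, Set.indicator_of_notMem hx, zero_mul]; simp
  have hintAΔ : ⟪ψ, AΔ ψ⟫_ℂ = ((∫ x, Δ.indicator g x ∂μ : ℝ) : ℂ) := by
    rw [hAΔ ψ ψ]
    rw [show (fun x => Set.indicator Δ (fun _ => (1 : ℂ)) x * (⟪ψ, η x⟫_ℂ * ⟪η x, ψ⟫_ℂ))
        = fun x => ((Δ.indicator g x : ℝ) : ℂ) from funext hind]
    exact integral_ofReal
  have hgind_int : Integrable (Δ.indicator g) μ := hg_int.indicator hΔ
  have hg_nonneg : ∀ x, 0 ≤ g x := fun x => Complex.normSq_nonneg _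
  constructor
  · intro hAψ
    -- ∫ Δᶜ.indicator g = 0
    have htot : ⟪ψ, ψ⟫_ℂ = ((∫ x, g x ∂μ : ℝ) : ℂ) := by
      rw [← hres ψ ψ]
      rw [show (fun x => ⟪ψ, η x⟫_ℂ * ⟪η x, ψ⟫_ℂ) = fun x => ((g x : ℝ) : ℂ) from funext hfre]
      exact integral_ofReal
    have heq : (∫ x, Δ.indicator g x ∂μ) = ∫ x, g x ∂μ := by
      have : ((∫ x, Δ.indicator g x ∂μ : ℝ) : ℂ) = ((∫ x, g x ∂μ : ℝ) : ℂ) := by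
        rw [← hintAΔ, ← htot, hAψ]
      exact_mod_cast this
    have hcompl : (∫ x, Δᶜ.indicator g x ∂μ) = 0 := by
      have hsplit : ∀ x, Δᶜ.indicator g x = g x - Δ.indicator g x := by
        intro x
        by_cases hx : x ∈ Δ <;> simp [Set.indicator, hx]
      rw [show (fun x => Δᶜ.indicator g x) = fun x => g x - Δ.indicator g x from
        funext hsplit, integral_sub hg_int hgind_int, heq, sub_self]
    have h0 : Δᶜ.indicator g =ᵐ[μ] 0 := by
      refine (integral_eq_zero_iff_of_nonneg ?_ (hg_int.indicator hΔ.compl)).mp hcompl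
      intro x
      by_cases hx : x ∈ Δᶜ <;> simp [Set.indicator, hx, hg_nonneg x]
    filter_upwards [h0] with x hx hxΔ
    have : g x = 0 := by
      have := hx
      simp only [Set.indicator_of_mem (Set.mem_compl hxΔ), Pi.zero_apply] at this
      exact this
    exact Complex.normSq_eq_zero.mp this
  · intro hAψ
    have hzero : (∫ x, Δ.indicator g x ∂μ) = 0 := by
      have : ((∫ x, Δ.indicator g x ∂μ : ℝ) : ℂ) = 0 := by
        rw [← hintAΔ, hAψ]; simp
      exact_mod_cast this
    have h0 : Δ.indicator g =ᵐ[μ] 0 := by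
      refine (integral_eq_zero_iff_of_nonneg ?_ hgind_int).mp hzero
      intro x
      by_cases hx : x ∈ Δ <;> simp [Set.indicator, hx, hg_nonneg x]
    filter_upwards [h0] with x hx hxΔ
    have : g x = 0 := by
      have := hx
      simp only [Set.indicator_of_mem hxΔ, Pi.zero_apply] at this
      exact this
    exact Complex.normSq_eq_zero.mp this
end
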